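/- Dual variable range estimation via the duality gap: suppose ᾱ ∈ ℝ^n maximizes D over ℝ^n. Then for every α ∈ ℝ^n and every β ∈ ℝ^p, P(β) − D(α) ≥ 0 and ‖α − ᾱ‖ ≤ √(2(P(β) − D(α))). -/

import Mathlib

noncomputable section

/-- ℓ₀ "norm": number of nonzero entries, as a real number. -/
def zeroNorm {p : ℕ} (β : EuclideanSpace ℝ (Fin p)) : ℝ :=
  ((Finset.univ.filter fun j => β j ≠ 0).card : ℝ)

/-- ℓ₁ norm. -/
def oneNorm {p : ℕ} (β : EuclideanSpace ℝ (Fin p)) : ℝ := ∑ j, |β j|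

/-- `X β`, where `x j` is the `j`-th column of `X`. -/
def Xmul {n p : ℕ} (x : Fin p → EuclideanSpace ℝ (Fin n))
    (β : EuclideanSpace ℝ (Fin p)) : EuclideanSpace ℝ (Fin n) :=
  ∑ j, β j • x j

/-- Primal objective `P(β)`. -/
def Pobj {n p : ℕ} (x : Fin p → EuclideanSpace ℝ (Fin n)) (y : EuclideanSpace ℝ (Fin n))
    (l0 l1 l2 : ℝ) (β : EuclideanSpace ℝ (Fin p)) : ℝ :=
  (1/2) * ‖y - Xmul x β‖^2 + l0 * zeroNorm β + l1 * oneNorm β + l2 * ‖β‖^2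

/-- Lagrangian `L(β, α)`. -/
def Lag {n p : ℕ} (x : Fin p → EuclideanSpace ℝ (Fin n)) (y : EuclideanSpace ℝ (Fin n))
    (l0 l1 l2 : ℝ) (β : EuclideanSpace ℝ (Fin p)) (α : EuclideanSpace ℝ (Fin n)) : ℝ :=
  (inner ℝ α (Xmul x β) : ℝ) - (1/2) * ‖α‖^2 - (inner ℝ y α : ℝ)
    + l0 * zeroNorm β + l1 * oneNorm β + l2 * ‖β‖^2

/-- `η_j(α) = −⟨x_j, α⟩ / (2 λ₂)`. -/
def etav {n p : ℕ} (x : Fin p → EuclideanSpace ℝ (Fin n)) (l2 : ℝ)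
    (α : EuclideanSpace ℝ (Fin n)) (j : Fin p) : ℝ :=
  -(inner ℝ (x j) α : ℝ) / (2 * l2)

/-- Threshold `η₀ = (2√(λ₀λ₂) + λ₁)/(2λ₂)`. -/
def eta0 (l0 l1 l2 : ℝ) : ℝ := (2 * Real.sqrt (l0 * l2) + l1) / (2 * l2)

/-- Scalar function `ψ` appearing in the dual objective. -/
def psi (l0 l1 l2 : ℝ) (t : ℝ) : ℝ :=
  if eta0 l0 l1 l2 ≤ |t| then -l2 * (|t| - l1 / (2 * l2))^2 + l0 else 0

/-- Dual objective `D(α)` for the square loss. -/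
def Dobj {n p : ℕ} (x : Fin p → EuclideanSpace ℝ (Fin n)) (y : EuclideanSpace ℝ (Fin n))
    (l0 l1 l2 : ℝ) (α : EuclideanSpace ℝ (Fin n)) : ℝ :=
  -(1/2) * ‖α‖^2 - (inner ℝ y α : ℝ) + ∑ j : Fin p, psi l0 l1 l2 (etav x l2 α j)

/-- Thresholding map `𝔅`. -/
def Bth (l0 l1 l2 : ℝ) (t : ℝ) : ℝ :=
  if eta0 l0 l1 l2 ≤ |t| then Real.sign t * (|t| - l1 / (2 * l2)) else 0

/-- Primal-dual link `β(α)` with entries `β_j(α) = 𝔅(η_j(α))`. -/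
def betaOf {n p : ℕ} (x : Fin p → EuclideanSpace ℝ (Fin n)) (l0 l1 l2 : ℝ)
    (α : EuclideanSpace ℝ (Fin n)) : EuclideanSpace ℝ (Fin p) :=
  WithLp.toLp 2 (fun j => Bth l0 l1 l2 (etav x l2 α j))

/-- `(β̄, ᾱ)` is a saddle point of the Lagrangian `L`. -/
def IsSaddle {n p : ℕ} (x : Fin p → EuclideanSpace ℝ (Fin n)) (y : EuclideanSpace ℝ (Fin n))
    (l0 l1 l2 : ℝ) (βb : EuclideanSpace ℝ (Fin p)) (αb : EuclideanSpace ℝ (Fin n)) : Prop :=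
  (∀ α, Lag x y l0 l1 l2 βb α ≤ Lag x y l0 l1 l2 βb αb) ∧
  (∀ β, Lag x y l0 l1 l2 βb αb ≤ Lag x y l0 l1 l2 β αb)


/-! Coordinatewise, `ψ(t) = min_b (λ₀[b ≠ 0] + λ₁|b| + λ₂b² − 2λ₂tb)`, the minimum being attained
at `b = 𝔅(t)`. Summing the inequality over `j` and completing the square,
`P(β) − L(β, α) = ½‖y − Xβ + α‖²`, gives weak duality `D(α) ≤ L(β, α) ≤ P(β)`. As a minimum of
affine functions `ψ` is concave, so `D + ½‖·‖²` is concave, i.e. `D` is 1-strongly concave, and at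
its maximizer `½‖α − ᾱ‖² ≤ D(ᾱ) − D(α) ≤ P(β) − D(α)`. -/

open Set Filter Topology
open scoped RealInnerProductSpace

lemma ConcaveOn.of_forall_le_of_forall_exists_eq {ι E : Type*} [AddCommGroup E] [Module ℝ E]
    {s : Set E} {f : E → ℝ} {g : ι → E → ℝ} (hs : Convex ℝ s)
    (hg : ∀ i, ConcaveOn ℝ s (g i)) (hle : ∀ i, ∀ x ∈ s, f x ≤ g i x)
    (heq : ∀ x ∈ s, ∃ i, f x = g i x) : ConcaveOn ℝ s f := by
  refine ⟨hs, fun x hx y hy a b ha hb hab => ?_⟩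
  obtain ⟨i, hi⟩ := heq _ (hs hx hy ha hb hab)
  calc a • f x + b • f y ≤ a • g i x + b • g i y := by
        gcongr
        exacts [hle i x hx, hle i y hy]
    _ ≤ g i (a • x + b • y) := (hg i).2 hx hy ha hb hab
    _ = f (a • x + b • y) := hi.symm

lemma concaveOn_sum {ι E : Type*} [AddCommGroup E] [Module ℝ E] {s : Set E} (hs : Convex ℝ s)
    (t : Finset ι) {f : ι → E → ℝ} (hf : ∀ i ∈ t, ConcaveOn ℝ s (f i)) :
    ConcaveOn ℝ s fun x => ∑ i ∈ t, f i x := by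
  simpa only [← Finset.sum_apply] using
    Finset.sum_induction f (ConcaveOn ℝ s) (fun _ _ => ConcaveOn.add) (concaveOn_const 0 hs) hf

lemma StrongConcaveOn.sq_norm_sub_le_of_isMaxOn {E : Type*} [NormedAddCommGroup E]
    [NormedSpace ℝ E] {s : Set E} {m : ℝ} {f : E → ℝ} {x₀ x : E}
    (hf : StrongConcaveOn s m f) (hx₀ : x₀ ∈ s) (hmax : IsMaxOn f s x₀) (hx : x ∈ s) :
    m / 2 * ‖x - x₀‖ ^ 2 ≤ f x₀ - f x := by
  have hstep : ∀ t ∈ Ioo (0 : ℝ) 1, (1 - t) * (m / 2 * ‖x - x₀‖ ^ 2) ≤ f x₀ - f x := by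
    rintro t ⟨ht0, ht1⟩
    have hconc := hf.2 hx₀ hx (sub_nonneg.2 ht1.le) ht0.le (sub_add_cancel 1 t)
    have hle : f ((1 - t) • x₀ + t • x) ≤ f x₀ :=
      hmax (hf.1 hx₀ hx (sub_nonneg.2 ht1.le) ht0.le (sub_add_cancel 1 t))
    rw [norm_sub_rev] at hconc
    simp only [smul_eq_mul] at hconc
    refine le_of_mul_le_mul_left ?_ ht0
    nlinarith
  have hlim : Tendsto (fun t : ℝ => (1 - t) * (m / 2 * ‖x - x₀‖ ^ 2)) (𝓝[>] 0)
      (𝓝 (m / 2 * ‖x - x₀‖ ^ 2)) := by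
    refine tendsto_nhdsWithin_of_tendsto_nhds ?_
    have h := ((tendsto_const_nhds (x := (1 : ℝ))).sub (tendsto_id (x := 𝓝 (0 : ℝ)))).mul_const
      (m / 2 * ‖x - x₀‖ ^ 2)
    rwa [sub_zero, one_mul] at h
  exact le_of_tendsto hlim (eventually_of_mem (Ioo_mem_nhdsGT one_pos) hstep)

def coordPenalty (l0 l1 l2 b : ℝ) : ℝ :=
  (if b ≠ 0 then l0 else 0) + l1 * |b| + l2 * b ^ 2

section Scalar

variable {l0 l1 l2 : ℝ}

lemma eta0_eq (hl2 : 0 < l2) : eta0 l0 l1 l2 = √(l0 * l2) / l2 + l1 / (2 * l2) := by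
  unfold eta0
  field_simp

lemma mul_sq_sqrt_mul_div (hl0 : 0 ≤ l0) (hl2 : 0 < l2) : l2 * (√(l0 * l2) / l2) ^ 2 = l0 := by
  rw [div_pow, Real.sq_sqrt (by positivity)]
  field_simp

lemma psi_le_coordPenalty_sub (hl0 : 0 ≤ l0) (hl2 : 0 < l2) (b t : ℝ) :
    psi l0 l1 l2 t ≤ coordPenalty l0 l1 l2 b - 2 * l2 * t * b := by
  have hr : 0 ≤ √(l0 * l2) / l2 := by positivity
  have hl0r := mul_sq_sqrt_mul_div hl0 hl2
  have hl1c : l1 = 2 * l2 * (l1 / (2 * l2)) := by field_simp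
  unfold psi coordPenalty
  rw [eta0_eq hl2]
  set r := √(l0 * l2) / l2
  set c := l1 / (2 * l2)
  obtain rfl | hb := eq_or_ne b 0
  · simp only [ne_eq, not_true_eq_false, if_false, abs_zero]
    split_ifs with ht
    · nlinarith [mul_le_mul_of_nonneg_left
        (pow_le_pow_left₀ hr (show r ≤ |t| - c by linarith) 2) hl2.le]
    · simp
  have htb : l2 * (t * b) ≤ l2 * (|t| * |b|) :=
    mul_le_mul_of_nonneg_left (abs_mul t b ▸ le_abs_self _) hl2.le
  have hl1b : l1 * |b| = 2 * l2 * c * |b| := by rw [hl1c]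
  have hb2 : b ^ 2 = |b| ^ 2 := (sq_abs b).symm
  rw [if_pos hb]
  split_ifs with ht
  · nlinarith [mul_nonneg hl2.le (sq_nonneg (|b| - (|t| - c)))]
  · rcases le_or_gt (|t| - c) 0 with hu | hu
    · nlinarith [abs_nonneg b, mul_nonneg hl2.le (mul_nonneg (abs_nonneg b) (neg_nonneg.2 hu))]
    · nlinarith [mul_nonneg hl2.le (sq_nonneg (|b| - (|t| - c))),
        mul_le_mul_of_nonneg_left (pow_le_pow_left₀ hu.le (show |t| - c ≤ r by linarith) 2) hl2.le]

lemma psi_eq_coordPenalty_Bth_sub (hl0 : 0 ≤ l0) (hl1 : 0 ≤ l1) (hl2 : 0 < l2) (t : ℝ) :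
    psi l0 l1 l2 t = coordPenalty l0 l1 l2 (Bth l0 l1 l2 t) - 2 * l2 * t * Bth l0 l1 l2 t := by
  unfold psi Bth
  split_ifs with ht
  swap
  · simp [coordPenalty]
  have hr : 0 ≤ √(l0 * l2) / l2 := by positivity
  have hl0r := mul_sq_sqrt_mul_div hl0 hl2
  have hc : 0 ≤ l1 / (2 * l2) := by positivity
  have hl1c : l1 = 2 * l2 * (l1 / (2 * l2)) := by field_simp
  rw [eta0_eq hl2] at ht
  set r := √(l0 * l2) / l2
  set c := l1 / (2 * l2)
  set b := Real.sign t * (|t| - c)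
  have hb : |b| = |t| - c ∧ t * b = |t| * (|t| - c) := by
    rcases lt_trichotomy t 0 with h | rfl | h
    · refine ⟨?_, by simp only [b, Real.sign_of_neg h, abs_of_neg h]; ring⟩
      rw [abs_mul, Real.sign_of_neg h, abs_neg, abs_one, one_mul, abs_of_nonneg (by linarith)]
    · simp only [abs_zero] at ht
      simp [b]
      linarith
    · refine ⟨?_, by simp only [b, Real.sign_of_pos h, abs_of_pos h]; ring⟩
      rw [abs_mul, Real.sign_of_pos h, abs_one, one_mul, abs_of_nonneg (by linarith)]
  -- Above the threshold `𝔅(t)` can vanish only in the degenerate case `λ₀ = 0`.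
  have hind : (if b ≠ 0 then l0 else 0) = l0 := by
    split_ifs with h
    · rfl
    · have hr0 : r = 0 := by
        have := hb.1
        rw [not_not.1 h, abs_zero] at this
        linarith
      rw [← hl0r, hr0]
      ring
  unfold coordPenalty
  rw [hind, ← sq_abs b, hb.1, mul_assoc _ t, hb.2, hl1c]
  ring

lemma concaveOn_psi (hl0 : 0 ≤ l0) (hl1 : 0 ≤ l1) (hl2 : 0 < l2) :
    ConcaveOn ℝ univ (psi l0 l1 l2) := by
  refine .of_forall_le_of_forall_exists_eq
    (g := fun b t => coordPenalty l0 l1 l2 b - 2 * l2 * t * b) convex_univ (fun b => ?_) (fun b t _ => psi_le_coordPenalty_sub hl0 hl2 b t)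
    (fun t _ => ⟨_, psi_eq_coordPenalty_Bth_sub hl0 hl1 hl2 t⟩)
  refine ⟨convex_univ, fun t₁ _ t₂ _ μ ν _ _ hμν => le_of_eq ?_⟩
  simp only [smul_eq_mul]
  linear_combination (coordPenalty l0 l1 l2 b) * hμν

end Scalar

section Duality
variable {n p : ℕ} (x : Fin p → EuclideanSpace ℝ (Fin n)) (y : EuclideanSpace ℝ (Fin n))
  {l0 l1 l2 : ℝ}

lemma sum_coordPenalty (β : EuclideanSpace ℝ (Fin p)) :
    ∑ j, coordPenalty l0 l1 l2 (β j) = l0 * zeroNorm β + l1 * oneNorm β + l2 * ‖β‖ ^ 2 := by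
  simp only [coordPenalty, Finset.sum_add_distrib, ← Finset.mul_sum, zeroNorm, oneNorm,
    EuclideanSpace.norm_sq_eq, Real.norm_eq_abs, sq_abs, Finset.sum_ite, Finset.sum_const_zero]
  simp [mul_comm]

lemma inner_Xmul (α : EuclideanSpace ℝ (Fin n)) (β : EuclideanSpace ℝ (Fin p)) :
    ⟪α, Xmul x β⟫ = ∑ j, β j * ⟪x j, α⟫ := by
  simp only [Xmul, inner_sum, real_inner_smul_right, real_inner_comm]

lemma two_mul_etav (hl2 : l2 ≠ 0) (α : EuclideanSpace ℝ (Fin n)) (j : Fin p) :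
    2 * l2 * etav x l2 α j = -⟪x j, α⟫ := by
  unfold etav
  field_simp

lemma sum_psi_etav_le (hl0 : 0 ≤ l0) (hl2 : 0 < l2) (α : EuclideanSpace ℝ (Fin n))
    (β : EuclideanSpace ℝ (Fin p)) :
    ∑ j, psi l0 l1 l2 (etav x l2 α j)
      ≤ l0 * zeroNorm β + l1 * oneNorm β + l2 * ‖β‖ ^ 2 + ⟪α, Xmul x β⟫ := by
  have hsum : l0 * zeroNorm β + l1 * oneNorm β + l2 * ‖β‖ ^ 2 + ⟪α, Xmul x β⟫
      = ∑ j, (coordPenalty l0 l1 l2 (β j) - 2 * l2 * etav x l2 α j * β j) := by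
    simp only [Finset.sum_sub_distrib, sum_coordPenalty, inner_Xmul, two_mul_etav x hl2.ne']
    simp [mul_comm]
  rw [hsum]
  exact Finset.sum_le_sum fun j _ => psi_le_coordPenalty_sub hl0 hl2 _ _

lemma Dobj_le_Lag (hl0 : 0 ≤ l0) (hl2 : 0 < l2) (α : EuclideanSpace ℝ (Fin n))
    (β : EuclideanSpace ℝ (Fin p)) : Dobj x y l0 l1 l2 α ≤ Lag x y l0 l1 l2 β α := by
  have := sum_psi_etav_le x (l1 := l1) hl0 hl2 α β
  unfold Dobj Lag
  linarith

lemma Pobj_sub_Lag (α : EuclideanSpace ℝ (Fin n)) (β : EuclideanSpace ℝ (Fin p)) :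
    Pobj x y l0 l1 l2 β - Lag x y l0 l1 l2 β α = 1 / 2 * ‖y - Xmul x β + α‖ ^ 2 := by
  unfold Pobj Lag
  rw [norm_add_sq_real, inner_sub_left, real_inner_comm (Xmul x β) α]
  ring

lemma Dobj_le_Pobj (hl0 : 0 ≤ l0) (hl2 : 0 < l2) (α : EuclideanSpace ℝ (Fin n))
    (β : EuclideanSpace ℝ (Fin p)) : Dobj x y l0 l1 l2 α ≤ Pobj x y l0 l1 l2 β := by
  have := Pobj_sub_Lag x y (l0 := l0) (l1 := l1) (l2 := l2) α β
  linarith [Dobj_le_Lag x y (l1 := l1) hl0 hl2 α β, sq_nonneg ‖y - Xmul x β + α‖]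

lemma strongConcaveOn_Dobj (hl0 : 0 ≤ l0) (hl1 : 0 ≤ l1) (hl2 : 0 < l2) :
    StrongConcaveOn univ 1 (Dobj x y l0 l1 l2) := by
  have hpsi : ∀ j, ConcaveOn ℝ univ fun α => psi l0 l1 l2 (etav x l2 α j) := fun j => by
    simpa [etav, Function.comp_def, div_eq_inv_mul, neg_div] using
      (concaveOn_psi hl0 hl1 hl2).comp_linearMap ((-(2 * l2)⁻¹) • innerₛₗ ℝ (x j))
  rw [strongConcaveOn_iff_convex]
  have hlin : ConcaveOn ℝ univ fun α => -⟪y, α⟫ := (-innerₛₗ ℝ y).concaveOn convex_univ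
  refine (hlin.add (concaveOn_sum convex_univ Finset.univ fun j _ => hpsi j)).congr fun α _ => ?_
  simp only [Pi.add_apply, Dobj]
  ring

end Duality

/-- dual variable range estimation via the duality gap (square loss, μ = 1). -/
theorem stmt12 (n p : ℕ) (x : Fin p → EuclideanSpace ℝ (Fin n))
    (y : EuclideanSpace ℝ (Fin n)) (l0 l1 l2 : ℝ)
    (hl0 : 0 < l0) (hl1 : 0 ≤ l1) (hl2 : 0 < l2)
    (αb : EuclideanSpace ℝ (Fin n))
    (hmax : ∀ α : EuclideanSpace ℝ (Fin n), Dobj x y l0 l1 l2 α ≤ Dobj x y l0 l1 l2 αb) :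
    ∀ (α : EuclideanSpace ℝ (Fin n)) (β : EuclideanSpace ℝ (Fin p)),
      0 ≤ Pobj x y l0 l1 l2 β - Dobj x y l0 l1 l2 α ∧
      ‖α - αb‖ ≤ Real.sqrt (2 * (Pobj x y l0 l1 l2 β - Dobj x y l0 l1 l2 α)) := by
  intro α β
  have hgap : Dobj x y l0 l1 l2 α ≤ Pobj x y l0 l1 l2 β := Dobj_le_Pobj x y hl0.le hl2 α β
  have hgap_max : Dobj x y l0 l1 l2 αb ≤ Pobj x y l0 l1 l2 β := Dobj_le_Pobj x y hl0.le hl2 αb β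
  have hdist : 1 / 2 * ‖α - αb‖ ^ 2 ≤ Dobj x y l0 l1 l2 αb - Dobj x y l0 l1 l2 α :=
    (strongConcaveOn_Dobj x y hl0.le hl1 hl2).sq_norm_sub_le_of_isMaxOn
      (mem_univ αb) (fun α _ => hmax α) (mem_univ α)
  refine ⟨sub_nonneg.2 hgap, Real.le_sqrt_of_sq_le ?_⟩
  linarith
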